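/- arXiv:2010.15376 — 2 statements merged into one kernel-verified Lean document; each statement's English description precedes it below -/
import Mathlib

section
/- One-step contraction of the learned projected gradient descent (key inequality in the proof of Theorem 2). Let f : ℝ^m → ℝ, x ∈ ℝ^m, K = {z ∈ ℝ^m : f(z) ≤ f(x)} closed, D = {z − x : z ∈ K}, and C the closure of the conic hull {c·d : c ≥ 0, d ∈ D}. Let A ∈ ℝ^{n×m}, B ∈ ℝ^{m×n}, ω ∈ ℝ^n nonzero, y = Ax + ω, κ = 1 if f is convex and κ = 2 otherwise, ρ(B) = sup{ ⟨u, (I − BA)v⟩ : u, v ∈ C, ‖u‖₂ ≤ 1, ‖v‖₂ ≤ 1 }, and ξ(B) = sup{ ⟨u, Bω⟩ : u ∈ C, ‖u‖₂ ≤ 1 } / ‖ω‖₂. If x_t ∈ K and x_{t+1} is a nearest point in K to (I − BA)x_t + By, then ‖x_{t+1} − x‖₂ ≤ κ ρ(B) ‖x_t − x‖₂ + κ ξ(B) ‖ω‖₂. -/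
/-!
Write `g = (I - BA) xₜ + B y` and `e = xₜ - x`, `e' = xₜ₊₁ - x`, so that `g - x = (I - BA) e + B ω`.
Since `x ∈ K`, comparing the nearest point `xₜ₊₁` with `x` gives `‖e'‖² ≤ κ ⟪e', g - x⟫`; for
convex `K` the obtuse-angle characterisation of the projection yields the constant `κ = 1`.
Both `e` and `e'` span rays in the cone `C`, so normalising them bounds `⟪e', (I - BA) e⟫` by
`ρ ‖e'‖ ‖e‖` and `⟪e', B ω⟫` by `ξ ‖ω‖ ‖e'‖`; dividing by `‖e'‖` gives the claim.
-/

open scoped RealInnerProductSpace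

theorem le_of_sq_le_mul_of_nonneg {a b : ℝ} (hb : 0 ≤ b) (h : a ^ 2 ≤ a * b) : a ≤ b := by
  nlinarith

section NearestPoint

variable {E : Type*} [NormedAddCommGroup E] [InnerProductSpace ℝ E]

theorem real_inner_sub_le_zero_of_forall_norm_sub_le {K : Set E} (hK : Convex ℝ K) {u p : E}
    (hp : p ∈ K) (hmin : ∀ z ∈ K, ‖u - p‖ ≤ ‖u - z‖) {w : E} (hw : w ∈ K) :
    ⟪u - p, w - p⟫ ≤ 0 := by
  have : Nonempty K := ⟨⟨p, hp⟩⟩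
  refine (norm_eq_iInf_iff_real_inner_le_zero hK hp).1 ?_ w hw
  exact le_antisymm (le_ciInf fun z ↦ hmin z z.2)
    (ciInf_le ⟨0, Set.forall_mem_range.2 fun _ ↦ norm_nonneg _⟩ (⟨p, hp⟩ : K))

theorem sq_norm_sub_le_inner_of_real_inner_le_zero {u p x : E} (h : ⟪u - p, x - p⟫ ≤ 0) :
    ‖p - x‖ ^ 2 ≤ ⟪p - x, u - x⟫ := by
  have hsplit : u - x = (u - p) + (p - x) := by abel
  have hflip : ⟪p - x, u - p⟫ = -⟪u - p, x - p⟫ := by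
    rw [real_inner_comm, ← inner_neg_right, neg_sub]
  rw [hsplit, inner_add_right, real_inner_self_eq_norm_sq, hflip]
  linarith

theorem sq_norm_sub_le_two_mul_inner_of_norm_sub_le {u p x : E} (h : ‖u - p‖ ≤ ‖u - x‖) :
    ‖p - x‖ ^ 2 ≤ 2 * ⟪p - x, u - x⟫ := by
  have hsq : ‖u - p‖ ^ 2 ≤ ‖u - x‖ ^ 2 := pow_le_pow_left₀ (norm_nonneg _) h 2
  have hsplit : u - p = (u - x) - (p - x) := by abel
  rw [hsplit, norm_sub_sq_real, real_inner_comm] at hsq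
  linarith

theorem sq_norm_sub_le_mul_inner_of_forall_norm_sub_le {K : Set E} {u p x : E} (hp : p ∈ K)
    (hmin : ∀ z ∈ K, ‖u - p‖ ≤ ‖u - z‖) (hx : x ∈ K) {κ : ℝ}
    (hκ : Convex ℝ K ∧ κ = 1 ∨ κ = 2) :
    ‖p - x‖ ^ 2 ≤ κ * ⟪p - x, u - x⟫ := by
  rcases hκ with ⟨hK, rfl⟩ | rfl
  · rw [one_mul]
    exact sq_norm_sub_le_inner_of_real_inner_le_zero
      (real_inner_sub_le_zero_of_forall_norm_sub_le hK hp hmin hx)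
  · exact sq_norm_sub_le_two_mul_inner_of_norm_sub_le (hmin x hx)

end NearestPoint

section ConeSup

variable {E F : Type*} [NormedAddCommGroup E] [InnerProductSpace ℝ E]
  [NormedAddCommGroup F] [InnerProductSpace ℝ F]

theorem bddAbove_real_inner_unit (C : Set E) (w : E) :
    BddAbove {r : ℝ | ∃ u ∈ C, ‖u‖ ≤ 1 ∧ r = ⟪u, w⟫} := by
  refine ⟨‖w‖, ?_⟩
  rintro r ⟨u, -, hu, rfl⟩
  calc ⟪u, w⟫ ≤ ‖u‖ * ‖w‖ := real_inner_le_norm _ _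
    _ ≤ ‖w‖ := mul_le_of_le_one_left (norm_nonneg _) hu

theorem bddAbove_real_inner_map_unit (C : Set E) (C' : Set F) (T : F →L[ℝ] E) :
    BddAbove {r : ℝ | ∃ u ∈ C, ∃ v ∈ C', ‖u‖ ≤ 1 ∧ ‖v‖ ≤ 1 ∧ r = ⟪u, T v⟫} := by
  refine ⟨‖T‖, ?_⟩
  rintro r ⟨u, -, v, -, hu, hv, rfl⟩
  calc ⟪u, T v⟫ ≤ ‖u‖ * ‖T v‖ := real_inner_le_norm _ _
    _ ≤ 1 * (‖T‖ * 1) := by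
      gcongr
      exact T.le_of_opNorm_le_of_le le_rfl hv
    _ = ‖T‖ := by ring

theorem sSup_real_inner_unit_nonneg {C : Set E} (h0 : (0 : E) ∈ C) (w : E) :
    0 ≤ sSup {r : ℝ | ∃ u ∈ C, ‖u‖ ≤ 1 ∧ r = ⟪u, w⟫} :=
  le_csSup (bddAbove_real_inner_unit C w) ⟨0, h0, by simp, by simp⟩

theorem sSup_real_inner_map_unit_nonneg {C : Set E} {C' : Set F} (h0 : (0 : E) ∈ C)
    (h0' : (0 : F) ∈ C') (T : F →L[ℝ] E) :
    0 ≤ sSup {r : ℝ | ∃ u ∈ C, ∃ v ∈ C', ‖u‖ ≤ 1 ∧ ‖v‖ ≤ 1 ∧ r = ⟪u, T v⟫} :=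
  le_csSup (bddAbove_real_inner_map_unit C C' T) ⟨0, h0, 0, h0', by simp, by simp, by simp⟩

theorem real_inner_le_sSup_mul_norm {C : Set E} {u : E} (hu : ∀ c : ℝ, 0 ≤ c → c • u ∈ C)
    (w : E) : ⟪u, w⟫ ≤ sSup {r : ℝ | ∃ u ∈ C, ‖u‖ ≤ 1 ∧ r = ⟪u, w⟫} * ‖u‖ := by
  rcases eq_or_ne u 0 with rfl | hu0
  · simp
  have hnorm : 0 < ‖u‖ := norm_pos_iff.2 hu0
  have hunit : ⟪‖u‖⁻¹ • u, w⟫ ≤ sSup {r : ℝ | ∃ u ∈ C, ‖u‖ ≤ 1 ∧ r = ⟪u, w⟫} :=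
    le_csSup (bddAbove_real_inner_unit C w)
      ⟨_, hu _ (inv_nonneg.2 hnorm.le), (norm_smul_inv_norm hu0).le, rfl⟩
  rw [real_inner_smul_left, inv_mul_le_iff₀ hnorm] at hunit
  linarith

theorem real_inner_map_le_sSup_mul_norm_mul_norm {C : Set E} {C' : Set F} (T : F →L[ℝ] E)
    {u : E} {v : F} (hu : ∀ c : ℝ, 0 ≤ c → c • u ∈ C) (hv : ∀ c : ℝ, 0 ≤ c → c • v ∈ C') :
    ⟪u, T v⟫ ≤ sSup {r : ℝ | ∃ u ∈ C, ∃ v ∈ C', ‖u‖ ≤ 1 ∧ ‖v‖ ≤ 1 ∧ r = ⟪u, T v⟫} *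
      (‖u‖ * ‖v‖) := by
  rcases eq_or_ne u 0 with rfl | hu0
  · simp
  rcases eq_or_ne v 0 with rfl | hv0
  · simp
  have hunorm : 0 < ‖u‖ := norm_pos_iff.2 hu0
  have hvnorm : 0 < ‖v‖ := norm_pos_iff.2 hv0
  have hunit : ⟪‖u‖⁻¹ • u, T (‖v‖⁻¹ • v)⟫ ≤
      sSup {r : ℝ | ∃ u ∈ C, ∃ v ∈ C', ‖u‖ ≤ 1 ∧ ‖v‖ ≤ 1 ∧ r = ⟪u, T v⟫} :=
    le_csSup (bddAbove_real_inner_map_unit C C' T)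
      ⟨_, hu _ (inv_nonneg.2 hunorm.le), _, hv _ (inv_nonneg.2 hvnorm.le),
        (norm_smul_inv_norm hu0).le, (norm_smul_inv_norm hv0).le, rfl⟩
  rw [map_smul, real_inner_smul_left, real_inner_smul_right, ← mul_assoc, ← mul_inv,
    inv_mul_le_iff₀ (mul_pos hunorm hvnorm)] at hunit
  linarith

end ConeSup

open Classical in
theorem learned_PGD_one_step_contraction_general (m n : ℕ)
    (f : EuclideanSpace ℝ (Fin m) → ℝ) (x : EuclideanSpace ℝ (Fin m))
    (K : Set (EuclideanSpace ℝ (Fin m))) (hK : K = {z | f z ≤ f x})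
    (D : Set (EuclideanSpace ℝ (Fin m))) (hD : D = {d | ∃ z ∈ K, d = z - x})
    (C : Set (EuclideanSpace ℝ (Fin m)))
    (hC : C = closure {w | ∃ c : ℝ, 0 ≤ c ∧ ∃ d ∈ D, w = c • d})
    (A : Matrix (Fin n) (Fin m) ℝ) (B : Matrix (Fin m) (Fin n) ℝ)
    (ω : EuclideanSpace ℝ (Fin n))
    (y : EuclideanSpace ℝ (Fin n))
    (hy : y = Matrix.toEuclideanLin A x + ω)
    (κ : ℝ) (hκ : κ = if ConvexOn ℝ Set.univ f then 1 else 2)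
    (ρ ξ : ℝ)
    (hρ : ρ = sSup {r : ℝ | ∃ u ∈ C, ∃ v ∈ C, ‖u‖ ≤ 1 ∧ ‖v‖ ≤ 1 ∧
        r = ⟪u, v - Matrix.toEuclideanLin B (Matrix.toEuclideanLin A v)⟫})
    (hξ : ξ = sSup {r : ℝ | ∃ u ∈ C, ‖u‖ ≤ 1 ∧
        r = ⟪u, Matrix.toEuclideanLin B ω⟫} / ‖ω‖)
    (xt xt1 : EuclideanSpace ℝ (Fin m)) (hxt : xt ∈ K)
    (hxt1 : xt1 ∈ K ∧ ∀ z ∈ K,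
        ‖(xt - Matrix.toEuclideanLin B (Matrix.toEuclideanLin A xt)
            + Matrix.toEuclideanLin B y) - xt1‖ ≤
        ‖(xt - Matrix.toEuclideanLin B (Matrix.toEuclideanLin A xt)
            + Matrix.toEuclideanLin B y) - z‖) :
    ‖xt1 - x‖ ≤ κ * ρ * ‖xt - x‖ + κ * ξ * ‖ω‖ := by
  set LA := Matrix.toEuclideanLin A
  set LB := Matrix.toEuclideanLin B
  set T := (LinearMap.id - LB ∘ₗ LA).toContinuousLinearMap
  have hT : ∀ v, T v = v - LB (LA v) := fun _ ↦ rfl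
  have hxK : x ∈ K := by simp [hK]
  have hray : ∀ z ∈ K, ∀ c : ℝ, 0 ≤ c → c • (z - x) ∈ C := fun z hz c hc ↦
    hC ▸ subset_closure ⟨c, hc, z - x, hD ▸ ⟨z, hz, rfl⟩, rfl⟩
  have h0C : (0 : EuclideanSpace ℝ (Fin m)) ∈ C := by simpa using hray x hxK 0 le_rfl
  have hρT : ρ = sSup {r : ℝ | ∃ u ∈ C, ∃ v ∈ C, ‖u‖ ≤ 1 ∧ ‖v‖ ≤ 1 ∧ r = ⟪u, T v⟫} := hρ
  have hρ0 : 0 ≤ ρ := hρT ▸ sSup_real_inner_map_unit_nonneg h0C h0C T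
  have hξ0 : 0 ≤ ξ := hξ ▸ div_nonneg (sSup_real_inner_unit_nonneg h0C _) (norm_nonneg ω)
  have hκ0 : 0 ≤ κ := by rw [hκ]; split_ifs <;> norm_num
  have hproj : ‖xt1 - x‖ ^ 2 ≤ κ * ⟪xt1 - x, (xt - LB (LA xt) + LB y) - x⟫ := by
    refine sq_norm_sub_le_mul_inner_of_forall_norm_sub_le hxt1.1 hxt1.2 hxK ?_
    rw [hκ]
    split_ifs with hf
    · exact Or.inl ⟨by simpa [hK] using hf.convex_le (f x), rfl⟩
    · exact Or.inr rfl
  have hsplit : (xt - LB (LA xt) + LB y) - x = T (xt - x) + LB ω := by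
    rw [hT, hy]
    simp only [map_add, map_sub]
    abel
  have hρb : ⟪xt1 - x, T (xt - x)⟫ ≤ ρ * (‖xt1 - x‖ * ‖xt - x‖) :=
    hρT ▸ real_inner_map_le_sSup_mul_norm_mul_norm T (hray xt1 hxt1.1) (hray xt hxt)
  have hξb : ⟪xt1 - x, LB ω⟫ ≤ ξ * ‖ω‖ * ‖xt1 - x‖ := by
    rcases eq_or_ne ω 0 with rfl | hω
    · simp -- `ξ = _ / 0` is junk, but both sides vanish
    rw [hξ, div_mul_cancel₀ _ (norm_ne_zero_iff.2 hω)]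
    exact real_inner_le_sSup_mul_norm (hray xt1 hxt1.1) _
  have hsq : ‖xt1 - x‖ ^ 2 ≤ ‖xt1 - x‖ * (κ * ρ * ‖xt - x‖ + κ * ξ * ‖ω‖) :=
    calc ‖xt1 - x‖ ^ 2 ≤ κ * (⟪xt1 - x, T (xt - x)⟫ + ⟪xt1 - x, LB ω⟫) := by
          rwa [hsplit, inner_add_right] at hproj
      _ ≤ κ * (ρ * (‖xt1 - x‖ * ‖xt - x‖) + ξ * ‖ω‖ * ‖xt1 - x‖) := by gcongr
      _ = ‖xt1 - x‖ * (κ * ρ * ‖xt - x‖ + κ * ξ * ‖ω‖) := by ring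
  exact le_of_sq_le_mul_of_nonneg (by positivity) hsq

open Classical in
/-- One-step contraction of the learned projected gradient descent
(key inequality in the proof of Theorem 2). -/
theorem learned_PGD_one_step_contraction (m n : ℕ)
    (f : EuclideanSpace ℝ (Fin m) → ℝ) (x : EuclideanSpace ℝ (Fin m))
    (K : Set (EuclideanSpace ℝ (Fin m))) (hK : K = {z | f z ≤ f x})
    (hKclosed : IsClosed K)
    (D : Set (EuclideanSpace ℝ (Fin m))) (hD : D = {d | ∃ z ∈ K, d = z - x})
    (C : Set (EuclideanSpace ℝ (Fin m)))
    (hC : C = closure {w | ∃ c : ℝ, 0 ≤ c ∧ ∃ d ∈ D, w = c • d})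
    (A : Matrix (Fin n) (Fin m) ℝ) (B : Matrix (Fin m) (Fin n) ℝ)
    (ω : EuclideanSpace ℝ (Fin n)) (hω : ω ≠ 0)
    (y : EuclideanSpace ℝ (Fin n))
    (hy : y = Matrix.toEuclideanLin A x + ω)
    (κ : ℝ) (hκ : κ = if ConvexOn ℝ Set.univ f then 1 else 2)
    (ρ ξ : ℝ)
    (hρ : ρ = sSup {r : ℝ | ∃ u ∈ C, ∃ v ∈ C, ‖u‖ ≤ 1 ∧ ‖v‖ ≤ 1 ∧
        r = ⟪u, v - Matrix.toEuclideanLin B (Matrix.toEuclideanLin A v)⟫})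
    (hξ : ξ = sSup {r : ℝ | ∃ u ∈ C, ‖u‖ ≤ 1 ∧
        r = ⟪u, Matrix.toEuclideanLin B ω⟫} / ‖ω‖)
    (xt xt1 : EuclideanSpace ℝ (Fin m)) (hxt : xt ∈ K)
    (hxt1 : xt1 ∈ K ∧ ∀ z ∈ K,
        ‖(xt - Matrix.toEuclideanLin B (Matrix.toEuclideanLin A xt)
            + Matrix.toEuclideanLin B y) - xt1‖ ≤
        ‖(xt - Matrix.toEuclideanLin B (Matrix.toEuclideanLin A xt)
            + Matrix.toEuclideanLin B y) - z‖) :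
    ‖xt1 - x‖ ≤ κ * ρ * ‖xt - x‖ + κ * ξ * ‖ω‖ :=
  learned_PGD_one_step_contraction_general m n f x K hK D hD C hC A B ω y hy κ hκ ρ ξ hρ hξ xt xt1
    hxt hxt1
end

section
/- Projection comparison between a set and its conic hull (the lemma invoked in the proof of Theorem 2). Let D ⊆ ℝ^m be nonempty with 0 ∈ D, and let C be the closure of the conic hull {c·d : c ≥ 0, d ∈ D}. Let v ∈ ℝ^m, let p_D be a nearest point in D to v, and let p_C be a nearest point in C to v. Then ‖p_D‖₂ ≤ 2‖p_C‖₂. Moreover, if D is closed and convex, then ‖p_D‖₂ ≤ ‖p_C‖₂. -/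
/-!
A nearest point `p` of a cone `S` satisfies `⟪v, p⟫ = ‖p‖²`, and comparing `p` with the point of
norm `‖p‖` on the ray through any `x ∈ S` gives `⟪v, x⟫ ≤ ‖p‖ ‖x‖`. Taking `S = C` and `x = p_D`,
it remains to bound `‖p_D‖²` by a multiple of `⟪v, p_D⟫`: comparing `p_D` with `0 ∈ D` gives
`‖p_D‖² ≤ 2 ⟪v, p_D⟫`, and for convex `D` the first-order condition along the segment from
`p_D` to `0` gives `‖p_D‖² ≤ ⟪v, p_D⟫`.
-/

open scoped RealInnerProductSpace

variable {F : Type*} [NormedAddCommGroup F] [InnerProductSpace ℝ F]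

def IsNearestPoint (S : Set F) (v p : F) : Prop :=
  p ∈ S ∧ ∀ z ∈ S, ‖v - p‖ ≤ ‖v - z‖

/-- Unlike Mathlib's `ConvexCone`, not required to be convex. -/
def IsCone (S : Set F) : Prop :=
  ∀ x ∈ S, ∀ t : ℝ, 0 ≤ t → t • x ∈ S

def conicHull (D : Set F) : Set F :=
  {w | ∃ c : ℝ, 0 ≤ c ∧ ∃ d ∈ D, w = c • d}

theorem subset_conicHull (D : Set F) : D ⊆ conicHull D :=
  fun d hd => ⟨1, zero_le_one, d, hd, (one_smul ℝ d).symm⟩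

theorem isCone_closure_conicHull (D : Set F) : IsCone (closure (conicHull D)) := by
  intro x hx t ht
  refine map_mem_closure (continuous_const_smul t) hx ?_
  rintro _ ⟨c, hc, d, hd, rfl⟩
  exact ⟨t * c, mul_nonneg ht hc, d, hd, (mul_smul t c d).symm⟩

theorem IsCone.segment_smul_smul_subset {S : Set F} (hS : IsCone S) {x : F} (hx : x ∈ S)
    {a b : ℝ} (ha : 0 ≤ a) (hb : 0 ≤ b) : segment ℝ (a • x) (b • x) ⊆ S := by
  rintro _ ⟨s, t, hs, ht, -, rfl⟩
  rw [smul_smul, smul_smul, ← add_smul]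
  exact hS x hx _ (by positivity)

namespace IsNearestPoint

variable {S : Set F} {v p : F}

theorem inner_sub_nonpos (hp : IsNearestPoint S v p) {w : F} (hw : segment ℝ p w ⊆ S) :
    ⟪v - p, w - p⟫ ≤ 0 := by
  have hmin : IsMinOn (fun z => ‖v - z‖) (segment ℝ p w) p :=
    isMinOn_iff.2 fun z hz => hp.2 z (hw hz)
  exact (norm_eq_iInf_iff_real_inner_le_zero (convex_segment p w) (left_mem_segment ℝ p w)).1
    (hmin.iInf_eq (left_mem_segment ℝ p w)).symm w (right_mem_segment ℝ p w)

theorem norm_sq_le_two_mul_inner (hp : IsNearestPoint S v p) (h0 : 0 ∈ S) :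
    ‖p‖ ^ 2 ≤ 2 * ⟪v, p⟫ := by
  have h := pow_le_pow_left₀ (norm_nonneg _) (hp.2 0 h0) 2
  rw [norm_sub_sq_real, sub_zero] at h
  linarith

theorem norm_sq_le_inner_of_convex (hp : IsNearestPoint S v p) (hS : Convex ℝ S)
    (h0 : 0 ∈ S) : ‖p‖ ^ 2 ≤ ⟪v, p⟫ := by
  have h := hp.inner_sub_nonpos (hS.segment_subset hp.1 h0)
  rw [zero_sub, inner_neg_right, inner_sub_left, real_inner_self_eq_norm_sq] at h
  linarith

theorem inner_eq_norm_sq_of_isCone (hp : IsNearestPoint S v p) (hS : IsCone S) :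
    ⟪v, p⟫ = ‖p‖ ^ 2 := by
  have hseg (b : ℝ) (hb : 0 ≤ b) : segment ℝ p (b • p) ⊆ S := by
    simpa using hS.segment_smul_smul_subset hp.1 zero_le_one hb
  have h₀ := hp.inner_sub_nonpos (by simpa using hseg 0 le_rfl)
  have h₂ := hp.inner_sub_nonpos (hseg 2 zero_le_two)
  rw [zero_sub, inner_neg_right] at h₀
  rw [two_smul, add_sub_cancel_right] at h₂
  rw [inner_sub_left, real_inner_self_eq_norm_sq] at h₀ h₂
  linarith

theorem inner_le_norm_mul_norm_of_isCone (hp : IsNearestPoint S v p) (hS : IsCone S) {x : F}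
    (hx : x ∈ S) : ⟪v, x⟫ ≤ ‖p‖ * ‖x‖ := by
  rcases eq_or_ne p 0 with rfl | hp0
  · have hseg := hS.segment_smul_smul_subset hx le_rfl zero_le_one
    simpa using hp.inner_sub_nonpos (by simpa using hseg)
  rcases eq_or_ne x 0 with rfl | hx0
  · simp
  have hxpos : 0 < ‖x‖ := norm_pos_iff.2 hx0
  have hc : 0 < ‖p‖ / ‖x‖ := div_pos (norm_pos_iff.2 hp0) hxpos
  have hy : ‖(‖p‖ / ‖x‖) • x‖ = ‖p‖ := by
    rw [norm_smul, Real.norm_of_nonneg hc.le, div_mul_cancel₀ _ hxpos.ne']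
  have h := pow_le_pow_left₀ (norm_nonneg _) (hp.2 _ (hS x hx _ hc.le)) 2
  rw [norm_sub_sq_real, norm_sub_sq_real, hy, hp.inner_eq_norm_sq_of_isCone hS,
    real_inner_smul_right] at h
  refine le_of_mul_le_mul_left ?_ hc
  rw [mul_left_comm, div_mul_cancel₀ _ hxpos.ne', ← sq]
  linarith

end IsNearestPoint

theorem norm_proj_set_le_norm_proj_cone_general (m : ℕ)
    (D : Set (EuclideanSpace ℝ (Fin m))) (hD0 : (0 : EuclideanSpace ℝ (Fin m)) ∈ D)
    (C : Set (EuclideanSpace ℝ (Fin m)))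
    (hC : C = closure {w | ∃ c : ℝ, 0 ≤ c ∧ ∃ d ∈ D, w = c • d})
    (v : EuclideanSpace ℝ (Fin m))
    (pD : EuclideanSpace ℝ (Fin m)) (hpD : pD ∈ D ∧ ∀ z ∈ D, ‖v - pD‖ ≤ ‖v - z‖)
    (pC : EuclideanSpace ℝ (Fin m)) (hpC : pC ∈ C ∧ ∀ z ∈ C, ‖v - pC‖ ≤ ‖v - z‖) :
    ‖pD‖ ≤ 2 * ‖pC‖ ∧ (IsClosed D → Convex ℝ D → ‖pD‖ ≤ ‖pC‖) := by
  have hpD : IsNearestPoint D v pD := hpD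
  have hpC : IsNearestPoint (closure (conicHull D)) v pC := hC ▸ hpC
  have hcone : ⟪v, pD⟫ ≤ ‖pC‖ * ‖pD‖ :=
    hpC.inner_le_norm_mul_norm_of_isCone (isCone_closure_conicHull D)
      (subset_closure (subset_conicHull D hpD.1))
  refine ⟨?_, fun _ hconv => ?_⟩
  · nlinarith [hpD.norm_sq_le_two_mul_inner hD0, norm_nonneg pD, norm_nonneg pC]
  · nlinarith [hpD.norm_sq_le_inner_of_convex hconv hD0, norm_nonneg pD, norm_nonneg pC]

/-- Projection comparison between a set `D` (with `0 ∈ D`) and the closure `C` of its conic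
hull: the nearest point of `D` satisfies `‖p_D‖ ≤ 2 ‖p_C‖`, and `‖p_D‖ ≤ ‖p_C‖` when `D` is
closed and convex. -/
theorem norm_proj_set_le_norm_proj_cone (m : ℕ)
    (D : Set (EuclideanSpace ℝ (Fin m))) (hDne : D.Nonempty) (hD0 : (0 : EuclideanSpace ℝ (Fin m)) ∈ D)
    (C : Set (EuclideanSpace ℝ (Fin m)))
    (hC : C = closure {w | ∃ c : ℝ, 0 ≤ c ∧ ∃ d ∈ D, w = c • d})
    (v : EuclideanSpace ℝ (Fin m))
    (pD : EuclideanSpace ℝ (Fin m)) (hpD : pD ∈ D ∧ ∀ z ∈ D, ‖v - pD‖ ≤ ‖v - z‖)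
    (pC : EuclideanSpace ℝ (Fin m)) (hpC : pC ∈ C ∧ ∀ z ∈ C, ‖v - pC‖ ≤ ‖v - z‖) :
    ‖pD‖ ≤ 2 * ‖pC‖ ∧ (IsClosed D → Convex ℝ D → ‖pD‖ ≤ ‖pC‖) :=
  norm_proj_set_le_norm_proj_cone_general m D hD0 C hC v pD hpD pC hpC
end
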